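/- arXiv:2103.10980 — 2 statements merged into one kernel-verified Lean document; each statement's English description precedes it below -/
import Mathlib

section
/- If M is a real maximal ideal of C(X), then Z[M_B] = {Z(f) : f ∈ M_B} has the countable intersection property; consequently M_B is a real maximal ideal of B₁(X). -/
open Filter Topology

def CFun (X : Type*) [TopologicalSpace X] : Subring (X → ℝ) where
  carrier := {f | Continuous f}
  one_mem' := continuous_const
  zero_mem' := continuous_const
  add_mem' := fun hf hg => hf.add hg
  mul_mem' := fun hf hg => hf.mul hg
  neg_mem' := fun hf => hf.neg

def B1 (X : Type*) [TopologicalSpace X] : Subring (X → ℝ) where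
  carrier := {f | ∃ u : ℕ → C(X, ℝ), ∀ x, Tendsto (fun n => u n x) atTop (𝓝 (f x))}
  one_mem' := ⟨fun _ => 1, fun _ => tendsto_const_nhds⟩
  zero_mem' := ⟨fun _ => 0, fun _ => tendsto_const_nhds⟩
  add_mem' := by
    rintro f g ⟨u, hu⟩ ⟨v, hv⟩
    exact ⟨fun n => u n + v n, fun x => (hu x).add (hv x)⟩
  mul_mem' := by
    rintro f g ⟨u, hu⟩ ⟨v, hv⟩
    exact ⟨fun n => u n * v n, fun x => (hu x).mul (hv x)⟩
  neg_mem' := by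
    rintro f ⟨u, hu⟩
    exact ⟨fun n => -u n, fun x => (hu x).neg⟩

theorem CFun_le_B1 (X : Type*) [TopologicalSpace X] : CFun X ≤ B1 X :=
  fun f hf => ⟨fun _ => ⟨f, hf⟩, fun _ => tendsto_const_nhds⟩

def inclB (X : Type*) [TopologicalSpace X] : CFun X →+* B1 X :=
  Subring.inclusion (CFun_le_B1 X)

def idealB {X : Type*} [TopologicalSpace X] (I : Ideal (CFun X)) : Set (B1 X) :=
  {f | ∃ u : ℕ → CFun X, (∀ n, u n ∈ I) ∧
    ∀ x, Tendsto (fun n => (u n : X → ℝ) x) atTop (𝓝 ((f : X → ℝ) x))}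

def IsRealMax {X : Type*} [TopologicalSpace X] (M : Ideal (CFun X)) : Prop :=
  M.IsMaximal ∧ Nonempty ((CFun X ⧸ M) ≃+* ℝ)

def IsRealMaxB {X : Type*} [TopologicalSpace X] (M : Ideal (B1 X)) : Prop :=
  M.IsMaximal ∧ Nonempty ((B1 X ⧸ M) ≃+* ℝ)

def evalC {X : Type*} [TopologicalSpace X] (p : X) : CFun X →+* ℝ :=
  (Pi.evalRingHom (fun _ => ℝ) p).comp (CFun X).subtype

def evalB {X : Type*} [TopologicalSpace X] (p : X) : B1 X →+* ℝ :=
  (Pi.evalRingHom (fun _ => ℝ) p).comp (B1 X).subtype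

def constB1 {X : Type*} [TopologicalSpace X] (r : ℝ) : B1 X :=
  ⟨fun _ => r, ⟨fun _ => ContinuousMap.const X r, fun _ => tendsto_const_nhds⟩⟩

/-!
A ring homomorphism `φ : C(X) → ℝ` is positive, since `φ (f * f) = (φ f) ^ 2`, hence monotone,
and every `f ∈ ker φ` has a zero, for otherwise `f` would be a unit. Given `u n ∈ ker φ`, the
continuous function `g = ∑ min ((u n) ^ 2, 2⁻ⁿ)` satisfies `0 ≤ φ g ≤ ∑_{i ≥ N} 2⁻ⁱ` for every `N`,
so `φ g = 0`, and a zero of `g` is a common zero of all `u n`. Zeros common to approximating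
sequences pass to the pointwise limits, which gives the countable intersection property of `M_B`.
Applied to `v n - φ (v n)`, where continuous `v n` converge pointwise to `g ∈ B₁(X)`, it gives a
point `x` with `g - g x ∈ M_B`; so every class of `B₁(X) ⧸ M_B` contains a constant, and since
`1 ∉ M_B` the constants identify that quotient with `ℝ`.
-/

namespace CFun

variable {X : Type*} [TopologicalSpace X]

def const : ℝ →+* CFun X where
  toFun r := ⟨fun _ => r, continuous_const⟩
  map_one' := rfl
  map_mul' _ _ := rfl
  map_zero' := rfl
  map_add' _ _ := rfl

variable (φ : CFun X →+* ℝ)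

theorem map_const (r : ℝ) : φ (const r) = r :=
  RingHom.congr_fun (Subsingleton.elim (φ.comp const) (RingHom.id ℝ)) r

theorem map_nonneg {f : CFun X} (hf : ∀ x, 0 ≤ (f : X → ℝ) x) : 0 ≤ φ f := by
  let s : CFun X := ⟨fun x => √((f : X → ℝ) x), Real.continuous_sqrt.comp f.2⟩
  have hs : s * s = f := Subtype.ext <| funext fun x => Real.mul_self_sqrt (hf x)
  rw [← hs, map_mul]
  exact mul_self_nonneg _

theorem map_le_map {f g : CFun X} (h : ∀ x, (f : X → ℝ) x ≤ (g : X → ℝ) x) : φ f ≤ φ g :=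
  sub_nonneg.1 <| map_sub φ g f ▸ map_nonneg φ fun x => sub_nonneg.2 (h x)

theorem exists_eq_zero_of_map_eq_zero {f : CFun X} (hf : φ f = 0) : ∃ x, (f : X → ℝ) x = 0 := by
  by_contra! hne
  let f' : CFun X := ⟨fun x => ((f : X → ℝ) x)⁻¹, f.2.inv₀ hne⟩
  have hf' : f * f' = 1 := Subtype.ext <| funext fun x => mul_inv_cancel₀ (hne x)
  simpa [hf] using congrArg φ hf'

theorem map_eq_zero_of_eq_tsum {t : ℕ → CFun X} {a : ℕ → ℝ} (ha : Summable a)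
    (ht_nonneg : ∀ n x, 0 ≤ (t n : X → ℝ) x) (ht_le : ∀ n x, (t n : X → ℝ) x ≤ a n)
    (ht : ∀ n, φ (t n) = 0) {g : CFun X} (hg : ∀ x, (g : X → ℝ) x = ∑' n, (t n : X → ℝ) x) :
    φ g = 0 := by
  have hsum x : Summable fun n => (t n : X → ℝ) x :=
    ha.of_nonneg_of_le (ht_nonneg · x) (ht_le · x)
  have hbound N : φ g ≤ ∑' i, a (i + N) := by
    have hle x : (g : X → ℝ) x ≤ ((∑ i ∈ Finset.range N, t i + const (∑' i, a (i + N)) :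
        CFun X) : X → ℝ) x := by
      rw [hg, ← (hsum x).sum_add_tsum_nat_add N]
      simpa [const] using (hsum x).comp_injective (add_left_injective N) |>.tsum_le_tsum
        (fun i => ht_le (i + N) x) (ha.comp_injective (add_left_injective N))
    simpa [map_sum, ht, map_const] using map_le_map φ hle
  have hg_nonneg : 0 ≤ φ g := map_nonneg φ fun x => hg x ▸ tsum_nonneg (ht_nonneg · x)
  exact le_antisymm (ge_of_tendsto' (tendsto_sum_nat_add a) hbound) hg_nonneg

theorem exists_forall_eq_zero_of_map_eq_zero {u : ℕ → CFun X} (hu : ∀ n, φ (u n) = 0) :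
    ∃ x, ∀ n, (u n : X → ℝ) x = 0 := by
  let t n : CFun X := ⟨fun x => min ((u n : X → ℝ) x ^ 2) ((1 / 2) ^ n),
    ((continuous_pow 2).comp (u n).2).min continuous_const⟩
  have ht_nonneg n x : 0 ≤ (t n : X → ℝ) x := le_min (sq_nonneg _) (by positivity)
  have ht_le n x : (t n : X → ℝ) x ≤ (1 / 2) ^ n := min_le_right _ _
  have ht n : φ (t n) = 0 := by
    have : φ (t n) ≤ φ (u n * u n) := map_le_map φ fun x => (min_le_left _ _).trans_eq (sq _)
    rw [map_mul, hu n, mul_zero] at this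
    exact le_antisymm this (map_nonneg φ (ht_nonneg n))
  let g : CFun X := ⟨fun x => ∑' n, (t n : X → ℝ) x,
    continuous_tsum (fun n => (t n).2) summable_geometric_two fun n x => by
      rw [Real.norm_of_nonneg (ht_nonneg n x)]; exact ht_le n x⟩
  obtain ⟨x, hx⟩ := exists_eq_zero_of_map_eq_zero φ <|
    map_eq_zero_of_eq_tsum φ summable_geometric_two ht_nonneg ht_le ht (g := g) fun _ => rfl
  refine ⟨x, fun n => ?_⟩
  have hsum : Summable fun n => (t n : X → ℝ) x :=
    summable_geometric_two.of_nonneg_of_le (ht_nonneg · x) (ht_le · x)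
  have htx : (t n : X → ℝ) x = 0 :=
    le_antisymm ((hsum.le_tsum n fun k _ => ht_nonneg k x).trans_eq hx) (ht_nonneg n x)
  have : (u n : X → ℝ) x ^ 2 = 0 := by
    rcases min_eq_iff.1 htx with ⟨h, _⟩ | ⟨h, _⟩
    · exact h
    · exact absurd h (by positivity)
  exact pow_eq_zero_iff two_ne_zero |>.1 this

end CFun

theorem IsRealMax.exists_ker_eq {X : Type*} [TopologicalSpace X] {M : Ideal (CFun X)}
    (hM : IsRealMax M) : ∃ φ : CFun X →+* ℝ, RingHom.ker φ = M := by
  obtain ⟨-, ⟨e⟩⟩ := hM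
  exact ⟨(e : CFun X ⧸ M →+* ℝ).comp (Ideal.Quotient.mk M),
    by rw [RingHom.ker_comp_of_injective _ e.injective, Ideal.mk_ker]⟩

theorem Ideal.isMaximal_and_nonempty_quotient_ringEquiv {K R : Type*} [Field K] [CommRing R]
    (c : K →+* R) {J : Ideal R} (hJ : J ≠ ⊤) (hc : ∀ g, ∃ r, g - c r ∈ J) :
    J.IsMaximal ∧ Nonempty (R ⧸ J ≃+* K) := by
  have : Nontrivial (R ⧸ J) := Ideal.Quotient.nontrivial_iff.2 hJ
  let ψ := (Ideal.Quotient.mk J).comp c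
  have hψ : Function.Surjective ψ := Ideal.Quotient.mk_surjective.forall.2 fun g => by
    obtain ⟨r, hr⟩ := hc g
    exact ⟨r, (Ideal.Quotient.eq.2 hr).symm⟩
  let e := RingEquiv.ofBijective ψ ⟨ψ.injective, hψ⟩
  exact ⟨Ideal.Quotient.maximal_of_isField J (e.symm.toMulEquiv.isField (Field.toIsField K)),
    ⟨e.symm⟩⟩

section idealB

variable {X : Type*} [TopologicalSpace X]

def idealBIdeal (I : Ideal (CFun X)) : Ideal (B1 X) where
  carrier := idealB I
  zero_mem' := ⟨0, fun _ => I.zero_mem, fun _ => tendsto_const_nhds⟩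
  add_mem' := by
    rintro f g ⟨u, hu, hu_lim⟩ ⟨v, hv, hv_lim⟩
    exact ⟨u + v, fun n => I.add_mem (hu n) (hv n), fun x => (hu_lim x).add (hv_lim x)⟩
  smul_mem' := by
    rintro ⟨f, w, hw_lim⟩ g ⟨u, hu, hu_lim⟩
    exact ⟨fun n => ⟨w n, (w n).continuous⟩ * u n, fun n => I.mul_mem_left _ (hu n),
      fun x => (hw_lim x).mul (hu_lim x)⟩

def B1.const : ℝ →+* B1 X := (inclB X).comp CFun.const

@[simp]
theorem B1.const_apply (r : ℝ) (x : X) : ((B1.const r : B1 X) : X → ℝ) x = r := rfl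

variable (φ : CFun X →+* ℝ)

theorem iInter_zeroSet_nonempty_of_mem_idealB_ker {g : ℕ → B1 X}
    (hg : ∀ n, g n ∈ idealB (RingHom.ker φ)) :
    (⋂ n, {x : X | (g n : X → ℝ) x = 0}).Nonempty := by
  choose u hu hu_lim using hg
  obtain ⟨x, hx⟩ := CFun.exists_forall_eq_zero_of_map_eq_zero φ
    (u := fun m => u m.unpair.1 m.unpair.2) fun m => hu _ _
  refine ⟨x, Set.mem_iInter.2 fun n => tendsto_nhds_unique (hu_lim n x) ?_⟩
  have hux k : (u n k : X → ℝ) x = 0 := by simpa using hx (Nat.pair n k)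
  simp [hux]

theorem idealBIdeal_ker_ne_top : idealBIdeal (RingHom.ker φ) ≠ ⊤ := fun h => by
  have h1 : (1 : B1 X) ∈ idealB (RingHom.ker φ) := (Ideal.eq_top_iff_one _).1 h
  obtain ⟨x, hx⟩ := iInter_zeroSet_nonempty_of_mem_idealB_ker φ fun _ => h1
  simpa using Set.mem_iInter.1 hx 0

theorem exists_sub_const_mem_idealB_ker (g : B1 X) :
    ∃ r, g - B1.const r ∈ idealB (RingHom.ker φ) := by
  obtain ⟨v, hv⟩ := g.2
  let w n : CFun X := ⟨v n, (v n).continuous⟩ - CFun.const (φ ⟨v n, (v n).continuous⟩)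
  have hw n : w n ∈ RingHom.ker φ := by simp [w, CFun.map_const]
  obtain ⟨x, hx⟩ := CFun.exists_forall_eq_zero_of_map_eq_zero φ hw
  have hwy y n : (w n : X → ℝ) y = v n y - v n x := by
    have hwx : v n x - φ ⟨v n, (v n).continuous⟩ = 0 := hx n
    change v n y - φ ⟨v n, (v n).continuous⟩ = v n y - v n x
    linarith
  refine ⟨(g : X → ℝ) x, w, hw, fun y => ?_⟩
  simpa [hwy] using (hv y).sub (hv x)

end idealB

theorem idealB_real_maximal {X : Type*} [TopologicalSpace X]
    (M : Ideal (CFun X)) (hM : IsRealMax M) :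
    (∀ g : ℕ → B1 X, (∀ n, g n ∈ idealB M) →
        (⋂ n : ℕ, {x : X | (g n : X → ℝ) x = 0}).Nonempty) ∧
      ∃ J : Ideal (B1 X), (↑J : Set (B1 X)) = idealB M ∧ IsRealMaxB J := by
  obtain ⟨φ, rfl⟩ := hM.exists_ker_eq
  exact ⟨fun _ => iInter_zeroSet_nonempty_of_mem_idealB_ker φ, idealBIdeal _, rfl,
    Ideal.isMaximal_and_nonempty_quotient_ringEquiv B1.const (idealBIdeal_ker_ne_top φ)
      (exists_sub_const_mem_idealB_ker φ)⟩
end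

section
/- There is an injective map from the set of all maximal ideals of C(X) into the set of all maximal ideals of B₁(X); hence |𝓜(C(X))| ≤ |𝓜(B₁(X))|. -/
/-!
A proper ideal `I` of `C(X)` has a common zero for each finite subset `s`: the continuous
function `∑ f ∈ s, f ^ 2` lies in `I`, so it is not a unit and must vanish somewhere. Hence `I`
stays proper even in the ring `X → ℝ` of all functions, and so in `B₁(X)` too. A maximal ideal
`N ⊇ I·B₁(X)` then satisfies `N ∩ C(X) = I` for `I` maximal, so `I ↦ N` is injective.
-/

open Filter Topology

theorem Ideal.exists_injective_maximal_of_map_ne_top {R S : Type*} [Semiring R] [Semiring S]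
    (f : R →+* S) (hf : ∀ M : Ideal R, M.IsMaximal → M.map f ≠ ⊤) :
    ∃ Φ : {M : Ideal R // M.IsMaximal} → {N : Ideal S // N.IsMaximal}, Function.Injective Φ := by
  have hext : ∀ M : {M : Ideal R // M.IsMaximal},
      ∃ N : Ideal S, N.IsMaximal ∧ M.1.map f ≤ N :=
    fun M => Ideal.exists_le_maximal _ (hf M.1 M.2)
  choose N hN hle using hext
  have hcomap : ∀ M, (N M).comap f = M.1 := fun M =>
    (M.2.eq_of_le (Ideal.comap_ne_top f (hN M).ne_top) (Ideal.map_le_iff_le_comap.mp (hle M))).symm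
  refine ⟨fun M => ⟨N M, hN M⟩, fun M₁ M₂ h => Subtype.ext ?_⟩
  have hN₁₂ : N M₁ = N M₂ := congrArg Subtype.val h
  rw [← hcomap M₁, ← hcomap M₂, hN₁₂]

namespace CFun

variable {X : Type*} [TopologicalSpace X]

theorem isUnit_of_forall_ne_zero {f : CFun X} (hf : ∀ x, (f : X → ℝ) x ≠ 0) : IsUnit f :=
  IsUnit.of_mul_eq_one (b := ⟨fun x => ((f : X → ℝ) x)⁻¹, f.2.inv₀ hf⟩) <|
    Subtype.ext <| funext fun x => mul_inv_cancel₀ (hf x)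

theorem exists_common_zero {I : Ideal (CFun X)} (hI : I ≠ ⊤) (s : Finset (CFun X))
    (hs : ↑s ⊆ (I : Set (CFun X))) : ∃ x, ∀ f ∈ s, (f : X → ℝ) x = 0 := by
  have hmem : ∑ f ∈ s, f * f ∈ I := I.sum_mem fun f hf => I.mul_mem_left f (hs hf)
  obtain ⟨x, hx⟩ : ∃ x, evalC x (∑ f ∈ s, f * f) = 0 := by
    by_contra! h
    exact hI (I.eq_top_of_isUnit_mem hmem (isUnit_of_forall_ne_zero h))
  have hsq : ∑ f ∈ s, evalC x f * evalC x f = 0 := by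
    simpa only [map_sum, map_mul] using hx
  refine ⟨x, fun f hf => ?_⟩
  exact mul_self_eq_zero.mp
    ((Finset.sum_eq_zero_iff_of_nonneg fun g _ => mul_self_nonneg _).mp hsq f hf)

theorem map_subtype_ne_top {I : Ideal (CFun X)} (hI : I ≠ ⊤) :
    I.map (CFun X).subtype ≠ ⊤ := by
  classical
  intro htop
  obtain ⟨T, hTI, hT⟩ := Submodule.mem_span_finite_of_mem_span
    ((Ideal.eq_top_iff_one _).mp htop)
  obtain ⟨s, hsI, rfl⟩ := Finset.subset_set_image_iff.mp hTI
  obtain ⟨x, hx⟩ := exists_common_zero hI s hsI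
  have hker : Ideal.span (s.image (CFun X).subtype : Set (X → ℝ)) ≤
      RingHom.ker (Pi.evalRingHom (fun _ => ℝ) x) := by
    rw [Ideal.span_le]
    rintro _ hg
    obtain ⟨f, hf, rfl⟩ := Finset.mem_image.mp hg
    exact hx f hf
  exact one_ne_zero (RingHom.mem_ker.mp (hker hT))

theorem map_inclB_ne_top {I : Ideal (CFun X)} (hI : I ≠ ⊤) : I.map (inclB X) ≠ ⊤ := by
  intro htop
  apply map_subtype_ne_top hI
  rw [← Ideal.map_top (B1 X).subtype, ← htop, Ideal.map_map]
  rfl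

end CFun

theorem maximal_ideals_inject {X : Type*} [TopologicalSpace X] :
    ∃ Φ : {M : Ideal (CFun X) // M.IsMaximal} → {N : Ideal (B1 X) // N.IsMaximal},
      Function.Injective Φ :=
  Ideal.exists_injective_maximal_of_map_ne_top (inclB X)
    fun _ hM => CFun.map_inclB_ne_top hM.ne_top
end
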